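/- The forward shift operator S⁺ on n qubits, the 2ⁿ×2ⁿ matrix with entries S⁺[k,k-1]=1 for 1≤k≤2ⁿ-1 and zero elsewhere, equals the sum over j from 1 to n of I^⊗(n-j) ⊗ σ₁₀ ⊗ σ₀₁^⊗(j-1); equivalently S⁺ = (S⁻)ᵀ. -/

import Mathlib

open Matrix Complex

noncomputable section

lemma tens_bpos {a b : ℕ} (i : Fin (a * b)) : 0 < b :=
  Nat.pos_of_ne_zero fun h => absurd i.isLt (by simp [h])

/-- Kronecker (tensor) product of square matrices, with the leftmost factor acting on
the most significant part of the index. -/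
def tens {a b : ℕ} (A : Matrix (Fin a) (Fin a) ℂ) (B : Matrix (Fin b) (Fin b) ℂ) :
    Matrix (Fin (a * b)) (Fin (a * b)) ℂ := fun i j =>
  A ⟨i.val / b, Nat.div_lt_of_lt_mul (i.isLt.trans_eq (Nat.mul_comm a b))⟩
      ⟨j.val / b, Nat.div_lt_of_lt_mul (j.isLt.trans_eq (Nat.mul_comm a b))⟩ *
    B ⟨i.val % b, Nat.mod_lt _ (tens_bpos i)⟩ ⟨j.val % b, Nat.mod_lt _ (tens_bpos j)⟩

def I2 : Matrix (Fin 2) (Fin 2) ℂ := 1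
def s00 : Matrix (Fin 2) (Fin 2) ℂ := !![1, 0; 0, 0]
def s01 : Matrix (Fin 2) (Fin 2) ℂ := !![0, 1; 0, 0]
def s10 : Matrix (Fin 2) (Fin 2) ℂ := !![0, 0; 1, 0]
def s11 : Matrix (Fin 2) (Fin 2) ℂ := !![0, 0; 0, 1]
def pauliX : Matrix (Fin 2) (Fin 2) ℂ := !![0, 1; 1, 0]
def pauliZ : Matrix (Fin 2) (Fin 2) ℂ := !![1, 0; 0, -1]

/-- `k`-fold tensor power of a one-qubit operator. -/
def tensPow (M : Matrix (Fin 2) (Fin 2) ℂ) : (k : ℕ) → Matrix (Fin (2 ^ k)) (Fin (2 ^ k)) ℂ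
  | 0 => 1
  | k + 1 => tens (tensPow M k) M

lemma pow_split {n j : ℕ} (h1 : 1 ≤ j) (h2 : j ≤ n) :
    2 ^ (n - j) * 2 * 2 ^ (j - 1) = 2 ^ n := by
  rw [mul_assoc, ← pow_succ', ← pow_add]; congr 1; omega

lemma two_pow_split {j : ℕ} (h : 1 ≤ j) : 2 * 2 ^ (j - 1) = 2 ^ j := by
  rw [← pow_succ']; congr 1; omega

/-- The backward shift operator `S⁻` : entries `S⁻[k-1,k] = 1`. -/
def Sminus (n : ℕ) : Matrix (Fin (2 ^ n)) (Fin (2 ^ n)) ℂ := fun i j =>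
  if i.val + 1 = j.val then 1 else 0

/-- The forward shift operator `S⁺` : entries `S⁺[k,k-1] = 1`. -/
def Splus (n : ℕ) : Matrix (Fin (2 ^ n)) (Fin (2 ^ n)) ℂ := fun i j =>
  if j.val + 1 = i.val then 1 else 0

/-- `A_j = i·I^⊗(n-j) ⊗ (σ₀₁ ⊗ σ₁₀^⊗(j-1) − σ₁₀ ⊗ σ₀₁^⊗(j-1))` acting on `(ℂ²)^⊗n`. -/
def Amat (n j : ℕ) : Matrix (Fin (2 ^ n)) (Fin (2 ^ n)) ℂ :=
  if h : 1 ≤ j ∧ j ≤ n then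
    Complex.I • (Matrix.reindex (finCongr (pow_split h.1 h.2)) (finCongr (pow_split h.1 h.2))
      (tens (tens (tensPow I2 (n - j)) s01) (tensPow s10 (j - 1)) -
        tens (tens (tensPow I2 (n - j)) s10) (tensPow s01 (j - 1))))
  else 0

/-- Spectral (operator) norm of a square complex matrix. -/
def specNorm {m : ℕ} (M : Matrix (Fin m) (Fin m) ℂ) : ℝ :=
  ‖Matrix.toEuclideanCLM (𝕜 := ℂ) M‖


/- ### Auxiliary lemmas -/

lemma s01_apply' (x y : Fin 2) : s01 x y = if (x : ℕ) = 0 ∧ (y : ℕ) = 1 then 1 else 0 := by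
  fin_cases x <;> fin_cases y <;> simp [s01]

lemma s10_apply' (x y : Fin 2) : s10 x y = if (x : ℕ) = 1 ∧ (y : ℕ) = 0 then 1 else 0 := by
  fin_cases x <;> fin_cases y <;> simp [s10]

lemma tensPow_I2_apply : ∀ (m : ℕ) (a b : Fin (2 ^ m)),
    tensPow I2 m a b = if (a : ℕ) = (b : ℕ) then 1 else 0
  | 0, a, b => by
    have ha : (a : ℕ) < 1 := by simpa using a.isLt
    have hb : (b : ℕ) < 1 := by simpa using b.isLt
    have : a = b := Fin.ext (by omega)
    subst this
    show (1 : Matrix (Fin (2 ^ 0)) (Fin (2 ^ 0)) ℂ) a a = _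
    simp [Matrix.one_apply]
  | m + 1, a, b => by
    show tens (tensPow I2 m) I2 a b = _
    unfold tens
    rw [tensPow_I2_apply m]
    have h2 : I2 (⟨(a : ℕ) % 2, Nat.mod_lt _ (tens_bpos a)⟩ : Fin 2)
        (⟨(b : ℕ) % 2, Nat.mod_lt _ (tens_bpos b)⟩ : Fin 2)
        = if (a : ℕ) % 2 = (b : ℕ) % 2 then 1 else 0 := by
      rw [I2, Matrix.one_apply]
      simp [Fin.ext_iff]
    rw [h2]
    by_cases h : (a : ℕ) = (b : ℕ)
    · rw [if_pos h, if_pos (by simp [h]), if_pos (by simp [h]), one_mul]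
    · rw [if_neg h]
      by_cases h1 : (a : ℕ) / 2 = (b : ℕ) / 2
      · have h2' : ¬ ((a : ℕ) % 2 = (b : ℕ) % 2) := by omega
        simp [h1, h2']
      · simp [h1]

lemma tensPow_s01_apply : ∀ (m : ℕ) (a b : Fin (2 ^ m)),
    tensPow s01 m a b = if (a : ℕ) = 0 ∧ (b : ℕ) = 2 ^ m - 1 then 1 else 0
  | 0, a, b => by
    have ha : (a : ℕ) < 1 := by simpa using a.isLt
    have hb : (b : ℕ) < 1 := by simpa using b.isLt
    have : a = b := Fin.ext (by omega)
    subst this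
    show (1 : Matrix (Fin (2 ^ 0)) (Fin (2 ^ 0)) ℂ) a a = _
    simp [Matrix.one_apply]
  | m + 1, a, b => by
    show tens (tensPow s01 m) s01 a b = _
    unfold tens
    rw [tensPow_s01_apply m, s01_apply']
    have hb : (b : ℕ) < 2 ^ m * 2 := b.isLt
    have ha : (a : ℕ) < 2 ^ m * 2 := a.isLt
    have hp : 0 < 2 ^ m := Nat.pow_pos (by norm_num)
    by_cases h : (a : ℕ) = 0 ∧ (b : ℕ) = 2 ^ (m + 1) - 1
    · rw [if_pos h, if_pos, if_pos, one_mul] <;> simp only [pow_succ] at h ⊢ <;> omega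
    · rw [if_neg h]
      by_cases h1 : ((a : ℕ) / 2 = 0 ∧ (b : ℕ) / 2 = 2 ^ m - 1)
      · have h2 : ¬ ((a : ℕ) % 2 = 0 ∧ (b : ℕ) % 2 = 1) := by
          simp only [pow_succ] at h; omega
        simp [h1, h2]
      · simp only [Fin.val_mk] at h1 ⊢
        rw [if_neg (by exact fun hc => h1 ⟨hc.1, hc.2⟩), zero_mul]

lemma nat_cond_imp {i k j : ℕ} (h1 : i / 2 ^ j / 2 = k / 2 ^ j / 2)
    (h2 : i / 2 ^ j % 2 = 1) (h3 : k / 2 ^ j % 2 = 0)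
    (h4 : i % 2 ^ j = 0) (h5 : k % 2 ^ j = 2 ^ j - 1) : i = k + 1 := by
  have hp : 0 < 2 ^ j := Nat.pow_pos (by norm_num)
  have di2 : 2 * (i / 2 ^ j / 2) + i / 2 ^ j % 2 = i / 2 ^ j := Nat.div_add_mod _ 2
  have dk2 : 2 * (k / 2 ^ j / 2) + k / 2 ^ j % 2 = k / 2 ^ j := Nat.div_add_mod _ 2
  have hq : i / 2 ^ j = k / 2 ^ j + 1 := by omega
  have e1 : i = 2 ^ j * (k / 2 ^ j) + 2 ^ j := by
    calc i = 2 ^ j * (i / 2 ^ j) + i % 2 ^ j := (Nat.div_add_mod _ _).symm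
    _ = 2 ^ j * (k / 2 ^ j + 1) + 0 := by rw [h4, hq]
    _ = 2 ^ j * (k / 2 ^ j) + 2 ^ j := by ring
  have e2 : k = 2 ^ j * (k / 2 ^ j) + (2 ^ j - 1) := by
    calc k = 2 ^ j * (k / 2 ^ j) + k % 2 ^ j := (Nat.div_add_mod _ _).symm
    _ = 2 ^ j * (k / 2 ^ j) + (2 ^ j - 1) := by rw [h5]
  generalize hs : 2 ^ j * (k / 2 ^ j) = s at e1 e2
  generalize ht : 2 ^ j = t at e1 e2 hp
  omega

lemma dvd_odd_of_cond {i j : ℕ} (h2 : i / 2 ^ j % 2 = 1) (h4 : i % 2 ^ j = 0) :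
    2 ^ j ∣ i ∧ ¬ 2 ^ (j + 1) ∣ i := by
  have hp : 0 < 2 ^ j := Nat.pow_pos (by norm_num)
  refine ⟨Nat.dvd_of_mod_eq_zero h4, fun hd => ?_⟩
  obtain ⟨m, hm⟩ := hd
  have : i / 2 ^ j = 2 * m := by
    rw [hm, show (2:ℕ) ^ (j + 1) * m = 2 ^ j * (2 * m) by ring]
    exact Nat.mul_div_cancel_left _ hp
  omega

lemma cond_unique {i j j' : ℕ} (h2 : i / 2 ^ j % 2 = 1) (h4 : i % 2 ^ j = 0)
    (h2' : i / 2 ^ j' % 2 = 1) (h4' : i % 2 ^ j' = 0) : j = j' := by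
  rcases lt_trichotomy j j' with h | h | h
  · obtain ⟨_, hnd⟩ := dvd_odd_of_cond h2 h4
    obtain ⟨hd, _⟩ := dvd_odd_of_cond h2' h4'
    exact absurd (dvd_trans (pow_dvd_pow 2 h) hd) hnd
  · exact h
  · obtain ⟨_, hnd⟩ := dvd_odd_of_cond h2' h4'
    obtain ⟨hd, _⟩ := dvd_odd_of_cond h2 h4
    exact absurd (dvd_trans (pow_dvd_pow 2 h) hd) hnd

lemma exists_cond {i : ℕ} (hi : 1 ≤ i) :
    i % 2 ^ (padicValNat 2 i) = 0 ∧ i / 2 ^ (padicValNat 2 i) % 2 = 1 ∧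
      2 ^ (padicValNat 2 i) ≤ i := by
  have h0 : i ≠ 0 := by omega
  set v := padicValNat 2 i with hv
  have hd : 2 ^ v ∣ i := pow_padicValNat_dvd
  have hnd : ¬ 2 ^ (v + 1) ∣ i := pow_succ_padicValNat_not_dvd h0
  have hp : 0 < 2 ^ v := Nat.pow_pos (by norm_num)
  obtain ⟨q, hq⟩ := hd
  have hiq : i / 2 ^ v = q := by rw [hq]; exact Nat.mul_div_cancel_left _ hp
  refine ⟨by rw [hq]; exact Nat.mul_mod_right _ _, ?_, Nat.le_of_dvd hi ⟨q, hq⟩⟩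
  by_contra hodd
  have hq0 : q % 2 = 0 := by omega
  obtain ⟨m, hm⟩ : 2 ∣ q := Nat.dvd_of_mod_eq_zero hq0
  exact hnd ⟨m, by rw [hq, hm, pow_succ]; ring⟩

lemma nat_cond_of {i j : ℕ} (hi : 1 ≤ i) (h2 : i / 2 ^ j % 2 = 1) (h4 : i % 2 ^ j = 0) :
    i / 2 ^ j / 2 = (i - 1) / 2 ^ j / 2 ∧ (i - 1) / 2 ^ j % 2 = 0 ∧
      (i - 1) % 2 ^ j = 2 ^ j - 1 := by
  have hp : 0 < 2 ^ j := Nat.pow_pos (by norm_num)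
  have e0 : i = 2 ^ j * (2 * (i / 2 ^ j / 2) + 1) := by
    calc i = 2 ^ j * (i / 2 ^ j) + i % 2 ^ j := (Nat.div_add_mod _ _).symm
    _ = 2 ^ j * (2 * (i / 2 ^ j / 2) + 1) + 0 := by
        rw [h4]; congr 1; congr 1
        have := Nat.div_add_mod (i / 2 ^ j) 2
        omega
    _ = _ := add_zero _
  have e2 : i - 1 = 2 ^ j * (2 * (i / 2 ^ j / 2)) + (2 ^ j - 1) := by
    have : 2 ^ j * (2 * (i / 2 ^ j / 2) + 1) = 2 ^ j * (2 * (i / 2 ^ j / 2)) + 2 ^ j := by ring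
    omega
  have hq : (i - 1) / 2 ^ j = 2 * (i / 2 ^ j / 2) := by
    rw [e2, Nat.mul_add_div hp, Nat.div_eq_of_lt (Nat.sub_lt hp one_pos), add_zero]
  have hr : (i - 1) % 2 ^ j = 2 ^ j - 1 := by
    rw [e2, Nat.mul_add_mod, Nat.mod_eq_of_lt (Nat.sub_lt hp one_pos)]
  refine ⟨?_, by omega, hr⟩
  rw [hq]
  omega


lemma term_apply (n : ℕ) (j : Fin n) (i k : Fin (2 ^ n)) :
    (Matrix.reindex (finCongr (pow_split (n := n) (j := j.val + 1) (Nat.le_add_left 1 j.val) j.isLt))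
      (finCongr (pow_split (n := n) (j := j.val + 1) (Nat.le_add_left 1 j.val) j.isLt))
      (tens (tens (tensPow I2 (n - (j.val + 1))) s10) (tensPow s01 j.val))) i k =
    (if (i : ℕ) / 2 ^ (j : ℕ) / 2 = (k : ℕ) / 2 ^ (j : ℕ) / 2 then 1 else 0) *
      (if (i : ℕ) / 2 ^ (j : ℕ) % 2 = 1 ∧ (k : ℕ) / 2 ^ (j : ℕ) % 2 = 0 then 1 else 0) *
      (if (i : ℕ) % 2 ^ (j : ℕ) = 0 ∧ (k : ℕ) % 2 ^ (j : ℕ) = 2 ^ (j : ℕ) - 1 then 1 else 0) := by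
  simp only [Matrix.reindex_apply, Matrix.submatrix_apply, finCongr_symm, finCongr_apply]
  simp only [tens, tensPow_I2_apply, s10_apply', tensPow_s01_apply, Fin.coe_cast,
    Nat.add_sub_cancel]

/-- the forward shift operator `S⁺` on `n` qubits equals
`∑_{j=1}^n I^⊗(n-j) ⊗ σ₁₀ ⊗ σ₀₁^⊗(j-1)`; equivalently `S⁺ = (S⁻)ᵀ`. -/
theorem shift_plus_decomposition (n : ℕ) (hn : 1 ≤ n) :
    (Splus n = ∑ j : Fin n,
      Matrix.reindex (finCongr (pow_split (n := n) (j := j.val + 1) (Nat.le_add_left 1 j.val) j.isLt))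
        (finCongr (pow_split (n := n) (j := j.val + 1) (Nat.le_add_left 1 j.val) j.isLt))
        (tens (tens (tensPow I2 (n - (j.val + 1))) s10) (tensPow s01 j.val))) ∧
    Splus n = (Sminus n)ᵀ := by
  constructor
  · ext i k
    rw [Matrix.sum_apply]
    simp only [term_apply]
    show (if (k : ℕ) + 1 = (i : ℕ) then (1 : ℂ) else 0) = _
    by_cases hik : (k : ℕ) + 1 = (i : ℕ)
    · have hi1 : 1 ≤ (i : ℕ) := by omega
      obtain ⟨hm0, hm1, hle⟩ := exists_cond hi1
      have hjn : padicValNat 2 (i : ℕ) < n := by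
        have h1 : (i : ℕ) < 2 ^ n := i.isLt
        have h2 : 2 ^ (padicValNat 2 (i : ℕ)) < 2 ^ n := Nat.lt_of_le_of_lt hle h1
        exact (Nat.pow_lt_pow_iff_right (by norm_num)).mp h2
      rw [if_pos hik, eq_comm,
        Finset.sum_eq_single (⟨padicValNat 2 (i : ℕ), hjn⟩ : Fin n)]
      · obtain ⟨c1, c2, c3⟩ := nat_cond_of hi1 hm1 hm0
        have hk : (k : ℕ) = (i : ℕ) - 1 := by omega
        rw [hk, if_pos c1, if_pos ⟨hm1, c2⟩, if_pos ⟨hm0, c3⟩]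
        norm_num
      · intro j _ hne
        by_cases c2 : (i : ℕ) / 2 ^ (j : ℕ) % 2 = 1 ∧ (k : ℕ) / 2 ^ (j : ℕ) % 2 = 0
        · by_cases c3 : (i : ℕ) % 2 ^ (j : ℕ) = 0 ∧
              (k : ℕ) % 2 ^ (j : ℕ) = 2 ^ (j : ℕ) - 1
          · have : (j : ℕ) = padicValNat 2 (i : ℕ) :=
              cond_unique c2.1 c3.1 hm1 hm0
            exact absurd (Fin.ext this) hne
          · rw [if_neg c3, mul_zero]
        · rw [if_neg c2, mul_zero, zero_mul]
      · intro h; exact absurd (Finset.mem_univ _) h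
    · rw [if_neg hik, eq_comm]
      apply Finset.sum_eq_zero
      intro j _
      by_cases c2 : (i : ℕ) / 2 ^ (j : ℕ) % 2 = 1 ∧ (k : ℕ) / 2 ^ (j : ℕ) % 2 = 0
      · by_cases c3 : (i : ℕ) % 2 ^ (j : ℕ) = 0 ∧
            (k : ℕ) % 2 ^ (j : ℕ) = 2 ^ (j : ℕ) - 1
        · by_cases c1 : (i : ℕ) / 2 ^ (j : ℕ) / 2 = (k : ℕ) / 2 ^ (j : ℕ) / 2
          · exact absurd (nat_cond_imp c1 c2.1 c2.2 c3.1 c3.2).symm hik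
          · rw [if_neg c1, zero_mul, zero_mul]
        · rw [if_neg c3, mul_zero]
      · rw [if_neg c2, mul_zero, zero_mul]
  · rfl

end
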